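/- Let k ≥ 3 be odd and let f: C_k^2 → C_3 be a binary polymorphism. Define g: C_k → C_3 by g(x) = f(x,x). Then deg g = deg_1 f + deg_2 f, where deg_i f are the degrees of f at its coordinates and deg g is the degree of the unary homomorphism g. -/

import Mathlib

/-- The oriented edge `[u,v]` as an edge chain: the antisymmetrized generator. -/
noncomputable def oe {V : Type*} [DecidableEq V] (u v : V) : V × V →₀ ℤ :=
  Finsupp.single (u, v) 1 - Finsupp.single (v, u) 1

/-- The map on edge chains induced by a map on vertices. -/
noncomputable def fE {V W : Type*} [DecidableEq V] [DecidableEq W] (f : V → W) :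
    (V × V →₀ ℤ) →+ (W × W →₀ ℤ) :=
  Finsupp.mapDomain.addMonoidHom (Prod.map f f)

/-- Adjacency in the `m`-cycle on vertex set `ZMod m`. -/
def CycAdj (m : ℕ) (u v : ZMod m) : Prop := v = u + 1 ∨ v = u - 1

/-- The oriented cycle `O_m = [0,1] + [1,2] + ⋯ + [m-1,0]` as an edge chain. -/
noncomputable def cycO (m : ℕ) : ZMod m × ZMod m →₀ ℤ :=
  ∑ i ∈ Finset.range m, oe (i : ZMod m) ((i : ZMod m) + 1)

/-- Adjacency in the direct power `C_kⁿ`: coordinatewise adjacency in `C_k`. -/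
def PowAdj (k n : ℕ) (x y : Fin n → ZMod k) : Prop := ∀ i, CycAdj k (x i) (y i)

open Classical in
/-- The edge chain `O_{k,i}ⁿ` of all oriented edges of `C_kⁿ` whose `i`-th coordinate is
oriented according to `O_k`. -/
noncomputable def Okin (k n : ℕ) [NeZero k] (i : Fin n) :
    ((Fin n → ZMod k) × (Fin n → ZMod k)) →₀ ℤ :=
  ∑ p ∈ Finset.univ.filter
      (fun p : (Fin n → ZMod k) × (Fin n → ZMod k) =>
        PowAdj k n p.1 p.2 ∧ p.2 i = p.1 i + 1),
    oe p.1 p.2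

/-! Weight each arc of `C_3` by its direction `±1` (the linear map `winding`, which is `6` on
`O_3`) and let `Φ δ = ∑ᵥ sign (f (v + δ) - f v)` be the flux of `f` along a step `δ` of `C_k²`.
The degree hypotheses say `12k d₁ = 2 (Φ(1,1) + Φ(1,-1))` and `12k d₂ = 2 (Φ(1,1) + Φ(-1,1))`,
and `Φ(-1,1) = -Φ(1,-1)`, so `Φ(1,1) = 3k (d₁ + d₂)`. Now `Φ(1,1)` is the sum of the fluxes of
the restrictions `x ↦ f (x, x + j)` to the diagonals; diagonals `j` and `j + 2` are joined by
4-cycles, which wind trivially around `C_3`, so their fluxes agree. As `k` is odd, all diagonal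
fluxes equal that of `g`, which is `3 deg g`, whence `Φ(1,1) = 3k deg g`. -/

noncomputable def winding : (ZMod 3 × ZMod 3 →₀ ℤ) →ₗ[ℤ] ℤ :=
  Finsupp.linearCombination ℤ fun p => (p.2 - p.1).valMinAbs

theorem ZMod.valMinAbs_neg_three : ∀ x : ZMod 3, (-x).valMinAbs = -x.valMinAbs := by decide

theorem ZMod.valMinAbs_four_cycle_three : ∀ a b c d : ZMod 3, a ≠ b → b ≠ c → c ≠ d → d ≠ a →
    (b - a).valMinAbs + (c - b).valMinAbs + (d - c).valMinAbs + (a - d).valMinAbs = 0 := by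
  decide

theorem winding_oe (u v : ZMod 3) : winding (oe u v) = 2 * (v - u).valMinAbs := by
  rw [oe, map_sub, winding, Finsupp.linearCombination_single, Finsupp.linearCombination_single,
    smul_eq_mul, smul_eq_mul, ← neg_sub u v, ZMod.valMinAbs_neg_three]
  ring

theorem winding_cycO_three : winding (cycO 3) = 6 := by
  simp only [cycO, map_sum, winding_oe, add_sub_cancel_left]
  rfl

theorem cycO_eq_sum (m : ℕ) [NeZero m] : cycO m = ∑ x : ZMod m, oe x (x + 1) :=
  Finset.sum_nbij' (↑) ZMod.val (by simp) (by simp [ZMod.val_lt])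
    (fun _ hi => ZMod.val_cast_of_lt (Finset.mem_range.1 hi)) (fun x _ => ZMod.natCast_zmod_val x)
    (fun _ _ => rfl)

theorem fE_oe {V W : Type*} [DecidableEq V] [DecidableEq W] (f : V → W) (u v : V) :
    fE f (oe u v) = oe (f u) (f v) := by
  simp [fE, oe, Finsupp.mapDomain_sub, Finsupp.mapDomain_single]

section Flux

variable {G : Type*} [AddCommGroup G] [Fintype G]

def flux (f : G → ZMod 3) (δ : G) : ℤ := ∑ v, (f (v + δ) - f v).valMinAbs

theorem flux_neg (f : G → ZMod 3) (δ : G) : flux f (-δ) = -flux f δ := by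
  rw [flux, flux, ← Finset.sum_neg_distrib, ← Equiv.sum_comp (Equiv.addRight δ)]
  refine Fintype.sum_congr _ _ fun v => ?_
  rw [Equiv.coe_addRight, add_neg_cancel_right, ← ZMod.valMinAbs_neg_three, neg_sub]

theorem flux_comp_add_right (f : G → ZMod 3) (δ t : G) :
    flux (fun v => f (v + t)) δ = flux f δ := by
  rw [flux, flux, ← Equiv.sum_comp (Equiv.addRight t) fun v => (f (v + δ) - f v).valMinAbs]
  simp only [Equiv.coe_addRight, add_right_comm _ t δ]

/-- Each ladder square `f v → f (v + δ) → g (v + δ) → g v` is a 4-cycle in `C_3`, so it winds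
trivially. -/
theorem flux_eq_of_ladder {f g : G → ZMod 3} {δ : G} (hf : ∀ v, f v ≠ f (v + δ))
    (hg : ∀ v, g v ≠ g (v + δ)) (hfg : ∀ v, f v ≠ g v) : flux f δ = flux g δ := by
  have hsq (v : G) : (f (v + δ) - f v).valMinAbs - (g (v + δ) - g v).valMinAbs =
      (g v - f v).valMinAbs - (g (v + δ) - f (v + δ)).valMinAbs := by
    have := ZMod.valMinAbs_four_cycle_three _ _ _ _ (hf v) (hfg (v + δ)) (hg v).symm (hfg v).symm
    rw [← neg_sub (g (v + δ)) (g v), ← neg_sub (g v) (f v), ZMod.valMinAbs_neg_three,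
      ZMod.valMinAbs_neg_three] at this
    linarith
  have htele : ∑ v, (g (v + δ) - f (v + δ)).valMinAbs = ∑ v, (g v - f v).valMinAbs :=
    Equiv.sum_comp (Equiv.addRight δ) fun v => (g v - f v).valMinAbs
  rw [← sub_eq_zero, flux, flux, ← Finset.sum_sub_distrib, Finset.sum_congr rfl fun v _ => hsq v,
    Finset.sum_sub_distrib, htele, sub_self]

variable [DecidableEq G]

theorem winding_fE_sum_oe (f : G → ZMod 3) (s : Finset G) :
    winding (fE f (∑ v, ∑ δ ∈ s, oe v (v + δ))) = 2 * ∑ δ ∈ s, flux f δ := by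
  simp only [map_sum, fE_oe, winding_oe, flux, Finset.mul_sum]
  exact Finset.sum_comm

end Flux

theorem winding_fE_cycO {m : ℕ} [NeZero m] (g : ZMod m → ZMod 3) :
    winding (fE g (cycO m)) = 2 * flux g 1 := by
  rw [cycO_eq_sum]
  simpa using winding_fE_sum_oe g {1}

theorem cycAdj_iff_sub {m : ℕ} {u v : ZMod m} : CycAdj m u v ↔ v - u = 1 ∨ v - u = -1 := by
  rw [CycAdj, sub_eq_iff_eq_add', sub_eq_iff_eq_add', ← sub_eq_add_neg]

theorem powAdj_two {k : ℕ} {a b c d : ZMod k} (hac : CycAdj k a c) (hbd : CycAdj k b d) :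
    PowAdj k 2 ![a, b] ![c, d] :=
  Fin.forall_fin_two.2 ⟨hac, hbd⟩

section Okin

variable (k : ℕ) [NeZero k]

def posSteps (n : ℕ) (i : Fin n) : Finset (Fin n → ZMod k) :=
  {δ | (∀ j, δ j = 1 ∨ δ j = -1) ∧ δ i = 1}

theorem Okin_eq_sum_posSteps (n : ℕ) (i : Fin n) :
    Okin k n i = ∑ v, ∑ δ ∈ posSteps k n i, oe v (v + δ) := by
  classical
  rw [Okin, Finset.sum_filter, Fintype.sum_prod_type]
  refine Fintype.sum_congr _ _ fun v => ?_
  rw [posSteps, Finset.sum_filter, ← Equiv.sum_comp (Equiv.addLeft v)]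
  refine Fintype.sum_congr _ _ fun δ => ?_
  simp [PowAdj, cycAdj_iff_sub]

variable {k}

theorem sum_posSteps_two_zero (hk : 3 ≤ k) {M : Type*} [AddCommMonoid M]
    (F : (Fin 2 → ZMod k) → M) : ∑ δ ∈ posSteps k 2 0, F δ = F ![1, 1] + F ![1, -1] := by
  have : Fact (2 < k) := ⟨hk⟩
  have hne : ![(1 : ZMod k), 1] ≠ ![1, -1] := fun h => ZMod.neg_one_ne_one (congrFun h 1).symm
  rw [← Finset.sum_pair hne]
  congr 1
  ext δ
  simp [posSteps, Fin.forall_fin_two, funext_iff]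
  tauto

theorem sum_posSteps_two_one (hk : 3 ≤ k) {M : Type*} [AddCommMonoid M]
    (F : (Fin 2 → ZMod k) → M) : ∑ δ ∈ posSteps k 2 1, F δ = F ![1, 1] + F ![-1, 1] := by
  have : Fact (2 < k) := ⟨hk⟩
  have hne : ![(1 : ZMod k), 1] ≠ ![-1, 1] := fun h => ZMod.neg_one_ne_one (congrFun h 0).symm
  rw [← Finset.sum_pair hne]
  congr 1
  ext δ
  simp [posSteps, Fin.forall_fin_two, funext_iff]
  tauto

end Okin

section Diagonals

variable {k : ℕ} [NeZero k]

theorem flux_eq_sum_flux_diagonal (f : (Fin 2 → ZMod k) → ZMod 3) :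
    flux f ![1, 1] = ∑ j, flux (fun x => f ![x, x + j]) 1 := by
  rw [flux, ← Equiv.sum_comp (piFinTwoEquiv fun _ => ZMod k).symm, Fintype.sum_prod_type]
  simp only [flux]
  conv_rhs => rw [Finset.sum_comm]
  refine Fintype.sum_congr _ _ fun x => ?_
  rw [← Equiv.sum_comp (Equiv.addLeft x)]
  simp [add_right_comm]

variable {f : (Fin 2 → ZMod k) → ZMod 3} (hf : ∀ x y, PowAdj k 2 x y → f x ≠ f y)
include hf

/-- The diagonals `j` and `j + 2` are joined by the rungs `(x, x + j) — (x - 1, x + j + 1)`. -/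
theorem flux_diagonal_add_two (j : ZMod k) :
    flux (fun x => f ![x, x + (j + 2)]) 1 = flux (fun x => f ![x, x + j]) 1 := by
  rw [← flux_comp_add_right _ 1 (-1)]
  refine (flux_eq_of_ladder (fun v => hf _ _ ?_) (fun v => hf _ _ ?_) (fun v => hf _ _ ?_)).symm
  · exact powAdj_two (Or.inl rfl) (Or.inl (by ring))
  · exact powAdj_two (Or.inl (by ring)) (Or.inl (by ring))
  · exact powAdj_two (Or.inr (by ring)) (Or.inl (by ring))

theorem flux_diagonal_eq (hk : Odd k) (j : ZMod k) :
    flux (fun x => f ![x, x + j]) 1 = flux (fun x => f fun _ => x) 1 := by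
  have heven (n : ℕ) : flux (fun x => f ![x, x + 2 * n]) 1 = flux (fun x => f fun _ => x) 1 := by
    induction n with
    | zero =>
      congr! 3 with x
      ext i
      fin_cases i <;> simp
    | succ n ih => rw [Nat.cast_succ, mul_add_one, flux_diagonal_add_two hf, ih]
  obtain ⟨t, ht⟩ := hk
  have htwo : (2 * (t + 1) : ZMod k) = 1 := by
    have hk0 : ((2 * t + 1 : ℕ) : ZMod k) = 0 := ht ▸ ZMod.natCast_self k
    push_cast at hk0
    linear_combination hk0
  have hj : j = 2 * ((t + 1) * j.val : ℕ) := by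
    push_cast
    rw [← mul_assoc, htwo, one_mul, ZMod.natCast_zmod_val]
  rw [hj, heven]

end Diagonals

/-- For a binary polymorphism `f : C_k² → C_3` (`k ≥ 3` odd), the diagonal unary
homomorphism `g(x) = f(x,x)` satisfies `deg g = deg₁ f + deg₂ f`. -/
theorem diagonal_degree_binary (k : ℕ) [NeZero k] (hk : 3 ≤ k) (hkodd : Odd k)
    (f : (Fin 2 → ZMod k) → ZMod 3)
    (hf : ∀ x y, PowAdj k 2 x y → f x ≠ f y)
    (d₁ d₂ dg : ℤ)
    (hd₁ : fE f (Okin k 2 0) = (2 * (k : ℤ) * d₁) • cycO 3)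
    (hd₂ : fE f (Okin k 2 1) = (2 * (k : ℤ) * d₂) • cycO 3)
    (hdg : fE (fun x : ZMod k => f (fun _ => x)) (cycO k) = dg • cycO 3) :
    dg = d₁ + d₂ := by
  have e₁ := congrArg winding hd₁
  have e₂ := congrArg winding hd₂
  have e₃ := congrArg winding hdg
  rw [Okin_eq_sum_posSteps, winding_fE_sum_oe, sum_posSteps_two_zero hk] at e₁
  rw [Okin_eq_sum_posSteps, winding_fE_sum_oe, sum_posSteps_two_one hk,
    show ![(-1 : ZMod k), 1] = -![1, -1] by simp, flux_neg] at e₂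
  rw [winding_fE_cycO] at e₃
  simp only [map_zsmul, winding_cycO_three, smul_eq_mul] at e₁ e₂ e₃
  have hdiag : flux f ![1, 1] = k * flux (fun x => f (fun _ => x)) 1 := by
    rw [flux_eq_sum_flux_diagonal, Finset.sum_congr rfl fun j _ => flux_diagonal_eq hf hkodd j]
    simp
  have hk0 : (12 * k : ℤ) ≠ 0 := by positivity
  apply mul_left_cancel₀ hk0
  linear_combination e₁ + e₂ - 4 * hdiag - 2 * k * e₃
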